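/- Let T > 0, γ ∈ ℝ, and β : [0,T) → (0,∞) continuous. Let v : [0,T) × ℝ → ℝ be 2π-periodic in x with v, v_x, v_xx, v_t, v_tx continuous, satisfying for all (t,x) ∈ [0,T) × ℝ: v_tx − γ v_xx + β(t) v v_xx = β(t) v² − β(t) v_x²/2 − β(t) (G*(v² + v_x²/2))(t,x), where (G*f)(x) = (1/(2 sinh π)) ∫₀^{2π} cosh((x−y) − 2π⌊(x−y)/(2π)⌋ − π) f(y) dy. Define M(t) = min_{x∈[0,2π]} v_x(t,x). Then M is locally Lipschitz on [0,T), and for almost every t ∈ (0,T): M'(t) = β(t)·( v(t,z(t))² − M(t)²/2 − (G*(v² + v_x²/2))(t, z(t)) ) for any z(t) with v_x(t,z(t)) = M(t); in particular M'(t) ≤ (β(t)/2)·( max_{x∈[0,2π]} v(t,x)² − M(t)² ) for almost every t ∈ (0,T). -/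

import Mathlib

/-!
At an interior time `t` where `M` is differentiable, let `z` minimise `v_x(t, ·)`. Then
`s ↦ v_x(s, z) - M(s)` is minimal at `s = t` and `v_x(t, ·)` is minimal at `z`, so
`M'(t) = v_tx(t, z)` and `v_xx(t, z) = 0`, and the equation becomes the Riccati identity.
`M` inherits a Lipschitz constant from the family `s ↦ v_x(s, z)`, whose time derivatives are
uniformly bounded on compacts. The inequality rests on `u(z)² / 2 ≤ G * (u² + u_x² / 2)(z)`
for periodic `C¹` functions `u`: integrate
`(sinh(s - π) u(z - s)²)' ≤ cosh(s - π) (2u² + u_x²)(z - s)` over one period, using `|sinh| ≤ cosh`.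
-/

open Real MeasureTheory Set intervalIntegral

/-- Convolution with the Green's function G(x) = cosh(x − 2π⌊x/(2π)⌋ − π)/(2 sinh π)
of 1 − ∂²ₓₓ on the torus 𝕋 = ℝ/2πℤ. -/
noncomputable def Gconv (f : ℝ → ℝ) (x : ℝ) : ℝ :=
  (1 / (2 * Real.sinh π)) *
    ∫ y in (0 : ℝ)..(2 * π),
      Real.cosh ((x - y) - 2 * π * (⌊(x - y) / (2 * π)⌋ : ℤ) - π) * f y

theorem Function.Periodic.of_hasDerivAt {𝕜 F : Type*} [NontriviallyNormedField 𝕜]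
    [NormedAddCommGroup F] [NormedSpace 𝕜 F] {u u' : 𝕜 → F} {c : 𝕜}
    (hu : Function.Periodic u c) (h : ∀ x, HasDerivAt u (u' x) x) : Function.Periodic u' c :=
  fun x => by
    have hshift := (h (x + c)).comp_add_const x c
    rw [show (fun x => u (x + c)) = u from funext hu] at hshift
    exact hshift.unique (h x)

theorem Function.Periodic.sInf_image_Icc_le {g : ℝ → ℝ} {p : ℝ} (hg : Function.Periodic g p)
    (hp : 0 < p) (hc : Continuous g) (x : ℝ) : sInf (g '' Icc 0 p) ≤ g x := by
  have hrange : g '' Icc 0 p = range g := by simpa using hg.image_Icc hp 0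
  exact csInf_le (hrange ▸ (isCompact_Icc.image hc).bddBelow) (hrange ▸ mem_range_self x)

theorem two_mul_sinh_mul_mul_le_cosh_mul (x a b : ℝ) :
    2 * sinh x * a * b ≤ cosh x * (a ^ 2 + b ^ 2) := by
  nlinarith [mul_nonneg (exp_pos (-x)).le (sq_nonneg (a + b)),
    mul_nonneg (exp_pos x).le (sq_nonneg (a - b)), cosh_add_sinh x, cosh_sub_sinh x]

theorem sinh_mul_sq_le_integral_cosh {u u' : ℝ → ℝ} {c : ℝ} (hc : 0 ≤ c)
    (hu : ∀ x, HasDerivAt u (u' x) x) (hu' : Continuous u') (hper : Function.Periodic u (2 * c))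
    (z : ℝ) :
    sinh c * u z ^ 2 ≤
      ∫ s in (0 : ℝ)..(2 * c), cosh (s - c) * (u (z - s) ^ 2 + u' (z - s) ^ 2 / 2) := by
  have hcont : Continuous u := continuous_iff_continuousAt.2 fun x => (hu x).continuousAt
  set F' : ℝ → ℝ := fun s =>
    cosh (s - c) * u (z - s) ^ 2 - 2 * sinh (s - c) * u (z - s) * u' (z - s)
  have hF : ∀ s, HasDerivAt (fun s => sinh (s - c) * u (z - s) ^ 2) (F' s) s := fun s => by
    have hsinh : HasDerivAt (fun s => sinh (s - c)) (cosh (s - c)) s := by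
      simpa using ((hasDerivAt_id s).sub_const c).sinh
    refine (hsinh.mul (((hu (z - s)).comp_const_sub z s).pow 2)).congr_deriv ?_
    simp only [Pi.pow_apply, Nat.cast_ofNat, Nat.add_one_sub_one, pow_one, mul_neg, F']
    ring
  have hftc : ∫ s in (0 : ℝ)..(2 * c), F' s = 2 * sinh c * u z ^ 2 := by
    rw [integral_eq_sub_of_hasDerivAt (fun s _ => hF s)
      (Continuous.intervalIntegrable (by fun_prop) _ _), hper.sub_eq]
    simp only [zero_sub, sinh_neg, sub_zero, show 2 * c - c = c by ring]
    ring
  have hle : ∫ s in (0 : ℝ)..(2 * c), F' s ≤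
      ∫ s in (0 : ℝ)..(2 * c), 2 * (cosh (s - c) * (u (z - s) ^ 2 + u' (z - s) ^ 2 / 2)) :=
    integral_mono_on (by linarith) (Continuous.intervalIntegrable (by fun_prop) _ _)
      (Continuous.intervalIntegrable (by fun_prop) _ _) fun s _ => by
      dsimp only [F']
      nlinarith [two_mul_sinh_mul_mul_le_cosh_mul (s - c) (u (z - s)) (-u' (z - s))]
  rw [intervalIntegral.integral_const_mul, hftc] at hle
  linarith

theorem Gconv_eq_integral_cosh {f : ℝ → ℝ} (hf : Function.Periodic f (2 * π)) (z : ℝ) :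
    Gconv f z = 1 / (2 * sinh π) * ∫ s in (0 : ℝ)..(2 * π), cosh (s - π) * f (z - s) := by
  set k : ℝ → ℝ := fun s => cosh (s - 2 * π * (⌊s / (2 * π)⌋ : ℤ) - π) * f (z - s)
  have hk : Function.Periodic k (2 * π) := by
    intro s
    have hfloor : ⌊(s + 2 * π) / (2 * π)⌋ = ⌊s / (2 * π)⌋ + 1 := by
      rw [add_div, div_self two_pi_pos.ne', Int.floor_add_one]
    simp only [k, hfloor, show z - (s + 2 * π) = z - s - 2 * π by ring, hf.sub_eq]
    push_cast
    ring_nf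
  have hfloor : ∀ s ∈ Ico 0 (2 * π), ⌊s / (2 * π)⌋ = 0 := fun s hs =>
    Int.floor_eq_zero_iff.2 ⟨div_nonneg hs.1 two_pi_pos.le, (div_lt_one two_pi_pos).2 hs.2⟩
  calc Gconv f z = 1 / (2 * sinh π) * ∫ s in (0 : ℝ)..(2 * π), k (z - s) := by
        simp only [Gconv, k, sub_sub_cancel]
    _ = 1 / (2 * sinh π) * ∫ s in (0 : ℝ)..(2 * π), k s := by
        rw [integral_comp_sub_left k z]
        simpa using hk.intervalIntegral_add_eq (z - 2 * π) 0
    _ = _ := by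
        congr 1
        refine integral_congr_ae
          ((measure_eq_zero_iff_ae_notMem.1 (measure_singleton (2 * π))).mono fun s hs hmem => ?_)
        rw [uIoc_of_le two_pi_pos.le] at hmem
        simp [k, hfloor s ⟨hmem.1.le, lt_of_le_of_ne hmem.2 hs⟩]

theorem sq_div_two_le_Gconv {u u' : ℝ → ℝ} (hu : ∀ x, HasDerivAt u (u' x) x)
    (hu' : Continuous u') (hper : Function.Periodic u (2 * π)) (z : ℝ) :
    u z ^ 2 / 2 ≤ Gconv (fun y => u y ^ 2 + u' y ^ 2 / 2) z := by
  have hper' := hper.of_hasDerivAt hu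
  have hsinh : 0 < sinh π := sinh_pos_iff.2 pi_pos
  rw [Gconv_eq_integral_cosh fun y => by simp only [hper y, hper' y]]
  calc u z ^ 2 / 2 = 1 / (2 * sinh π) * (sinh π * u z ^ 2) := by field_simp
    _ ≤ _ := by gcongr; exact sinh_mul_sq_le_integral_cosh pi_pos.le hu hu' hper z

theorem exists_lipschitzOnWith_of_continuousOn_hasDerivWithinAt {X : Type*}
    [TopologicalSpace X] {f f' : ℝ → X → ℝ} {s : Set ℝ} {L : Set X} (hs : Convex ℝ s)
    (hsc : IsCompact s) (hL : IsCompact L)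
    (hf : ∀ t ∈ s, ∀ x ∈ L, HasDerivWithinAt (f · x) (f' t x) s t)
    (hf' : ContinuousOn (fun p : ℝ × X => f' p.1 p.2) (s ×ˢ L)) :
    ∃ K, ∀ x ∈ L, LipschitzOnWith K (f · x) s := by
  obtain ⟨K, hK⟩ := ((hsc.prod hL).image_of_continuousOn hf'.nnnorm).bddAbove
  exact ⟨K, fun x hx => hs.lipschitzOnWith_of_nnnorm_hasDerivWithin_le
    (fun t ht => hf t ht x hx) fun t ht => hK ⟨(t, x), ⟨ht, hx⟩, rfl⟩⟩

theorem lipschitzOnWith_of_pointwise_min {α ι : Type*} [PseudoMetricSpace α]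
    {f : ι → α → ℝ} {M : α → ℝ} {s : Set α} {I : Set ι} {K : NNReal}
    (hf : ∀ i ∈ I, LipschitzOnWith K (f i) s)
    (hle : ∀ t ∈ s, ∀ i ∈ I, M t ≤ f i t) (hex : ∀ t ∈ s, ∃ i ∈ I, f i t = M t) :
    LipschitzOnWith K M s := by
  have hsub : ∀ t ∈ s, ∀ r ∈ s, M t - M r ≤ K * dist t r := fun t ht r hr => by
    obtain ⟨i, hi, hir⟩ := hex r hr
    have := (lipschitzOnWith_iff_dist_le_mul.1 (hf i hi)) t ht r hr
    rw [Real.dist_eq] at this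
    linarith [hle t ht i hi, le_abs_self (f i t - f i r)]
  refine lipschitzOnWith_iff_dist_le_mul.2 fun t ht r hr => ?_
  rw [Real.dist_eq, abs_sub_le_iff]
  exact ⟨hsub t ht r hr, dist_comm t r ▸ hsub r hr t ht⟩

theorem exists_lipschitzOnWith_of_forall_le_of_exists_eq {X : Type*} [TopologicalSpace X]
    {w w' : ℝ → X → ℝ} {M : ℝ → ℝ} {s : Set ℝ} {L : Set X} (hs : Convex ℝ s)
    (hsc : IsCompact s) (hL : IsCompact L)
    (hw : ∀ t ∈ s, ∀ x ∈ L, HasDerivWithinAt (w · x) (w' t x) s t)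
    (hw' : ContinuousOn (fun p : ℝ × X => w' p.1 p.2) (s ×ˢ L))
    (hle : ∀ t ∈ s, ∀ x ∈ L, M t ≤ w t x) (hex : ∀ t ∈ s, ∃ x ∈ L, w t x = M t) :
    ∃ K, LipschitzOnWith K M s :=
  let ⟨K, hK⟩ := exists_lipschitzOnWith_of_continuousOn_hasDerivWithinAt hs hsc hL hw hw'
  ⟨K, lipschitzOnWith_of_pointwise_min (f := fun x t => w t x) hK hle hex⟩

theorem HasDerivAt.eq_of_eventually_le {f g : ℝ → ℝ} {f' g' t : ℝ} (hf : HasDerivAt f f' t)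
    (hg : HasDerivAt g g' t) (hle : ∀ᶠ s in nhds t, g s ≤ f s) (heq : g t = f t) : g' = f' := by
  have hmin : IsLocalMin (fun s => f s - g s) t := hle.mono fun s hs => by
    simp only [heq, sub_self, sub_nonneg]; exact hs
  linarith [hmin.hasDerivAt_eq_zero (hf.sub hg)]

theorem minimal_slope_riccati_evolution_general
    (T : ℝ) (γ : ℝ) (β : ℝ → ℝ)
    (hβpos : ∀ t ∈ Set.Ico (0 : ℝ) T, 0 < β t)
    (v vx vxx vtx : ℝ → ℝ → ℝ)
    (hper : ∀ t x, v t (x + 2 * π) = v t x)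
    (hvx : ∀ t ∈ Set.Ico (0 : ℝ) T, ∀ x : ℝ, HasDerivAt (fun y => v t y) (vx t x) x)
    (hvxx : ∀ t ∈ Set.Ico (0 : ℝ) T, ∀ x : ℝ, HasDerivAt (fun y => vx t y) (vxx t x) x)
    (hvtx : ∀ t ∈ Set.Ico (0 : ℝ) T, ∀ x : ℝ,
      HasDerivWithinAt (fun s => vx s x) (vtx t x) (Set.Ico 0 T) t)
    (hvtxc : ContinuousOn (fun p : ℝ × ℝ => vtx p.1 p.2) (Set.Ico 0 T ×ˢ Set.univ))
    (hpde : ∀ t ∈ Set.Ico (0 : ℝ) T, ∀ x : ℝ,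
      vtx t x - γ * vxx t x + β t * v t x * vxx t x
        = β t * (v t x) ^ 2 - β t * (vx t x) ^ 2 / 2
          - β t * Gconv (fun y => (v t y) ^ 2 + (vx t y) ^ 2 / 2) x)
    (M : ℝ → ℝ) (hM : ∀ t, M t = sInf (vx t '' Set.Icc 0 (2 * π))) :
    (∀ a b : ℝ, 0 ≤ a → b < T → ∃ K : NNReal, LipschitzOnWith K M (Set.Icc a b)) ∧
    (∀ᵐ t ∂(volume.restrict (Set.Ioo 0 T)), ∀ m' : ℝ, HasDerivAt M m' t →
      (∀ z ∈ Set.Icc (0 : ℝ) (2 * π), vx t z = M t →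
        m' = β t * ((v t z) ^ 2 - (M t) ^ 2 / 2
          - Gconv (fun y => (v t y) ^ 2 + (vx t y) ^ 2 / 2) z)) ∧
      m' ≤ (β t / 2) * (sSup ((fun x => (v t x) ^ 2) '' Set.Icc 0 (2 * π)) - (M t) ^ 2)) := by
  have hvx_cont : ∀ t ∈ Ico 0 T, Continuous (vx t) := fun t ht =>
    continuous_iff_continuousAt.2 fun x => (hvxx t ht x).continuousAt
  have hM_le : ∀ t ∈ Ico 0 T, ∀ x, M t ≤ vx t x := fun t ht x =>
    hM t ▸ (Function.Periodic.of_hasDerivAt (hper t) (hvx t ht)).sInf_image_Icc_le two_pi_pos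
      (hvx_cont t ht) x
  have hM_attained : ∀ t ∈ Ico 0 T, ∃ z ∈ Icc 0 (2 * π), vx t z = M t := fun t ht =>
    hM t ▸ (isCompact_Icc.image (hvx_cont t ht)).sInf_mem ((nonempty_Icc.2 two_pi_pos.le).image _)
  refine ⟨fun a b ha hb => ?_, ?_⟩
  · have hsub : Icc a b ⊆ Ico 0 T := fun s hs => ⟨ha.trans hs.1, hs.2.trans_lt hb⟩
    exact exists_lipschitzOnWith_of_forall_le_of_exists_eq (convex_Icc a b) isCompact_Icc
      isCompact_Icc (fun t ht x _ => (hvtx t (hsub ht) x).mono hsub)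
      (hvtxc.mono (prod_mono hsub (subset_univ _))) (fun t ht x _ => hM_le t (hsub ht) x)
      fun t ht => hM_attained t (hsub ht)
  rw [ae_restrict_iff' measurableSet_Ioo]
  refine ae_of_all _ fun t ht m' hm' => ?_
  have ht' : t ∈ Ico 0 T := Ioo_subset_Ico_self ht
  have hnhds : Ico 0 T ∈ nhds t :=
    Filter.mem_of_superset (Ioo_mem_nhds ht.1 ht.2) Ioo_subset_Ico_self
  have hriccati : ∀ z ∈ Icc 0 (2 * π), vx t z = M t →
      m' = β t * ((v t z) ^ 2 - (M t) ^ 2 / 2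
        - Gconv (fun y => (v t y) ^ 2 + (vx t y) ^ 2 / 2) z) := fun z _ hz => by
    have hm'_eq : m' = vtx t z := ((hvtx t ht' z).hasDerivAt hnhds).eq_of_eventually_le hm'
      (Filter.mem_of_superset hnhds fun s hs => hM_le s hs z) hz.symm
    have hvxx_zero : vxx t z = 0 :=
      IsLocalMin.hasDerivAt_eq_zero (Filter.Eventually.of_forall fun x => hz ▸ hM_le t ht' x)
        (hvxx t ht' z)
    have hpde_z := hpde t ht' z
    rw [hvxx_zero, hz] at hpde_z
    rw [hm'_eq]
    linear_combination hpde_z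
  refine ⟨hriccati, ?_⟩
  obtain ⟨z, hz, hzM⟩ := hM_attained t ht'
  have hv_cont : Continuous (v t) :=
    continuous_iff_continuousAt.2 fun x => (hvx t ht' x).continuousAt
  have hG := sq_div_two_le_Gconv (hvx t ht') (hvx_cont t ht') (hper t) z
  have hsup : v t z ^ 2 ≤ sSup ((fun x => (v t x) ^ 2) '' Icc 0 (2 * π)) :=
    le_csSup (isCompact_Icc.image (hv_cont.pow 2)).bddAbove (mem_image_of_mem _ hz)
  rw [hriccati z hz hzM]
  nlinarith [hβpos t ht']

/-- The Riccati-type evolution (6.14) of the minimal slope M(t) = min_x v_x(t,x)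
for a classical 2π-periodic solution of the once-differentiated rescaled DGH
equation (6.13) with c₀ + γ = 0 (Proposition 6.2): M is locally Lipschitz and
for a.e. t, M'(t) = β(t)(v(t,z)² − M(t)²/2 − G*(v² + v_x²/2)(t,z)) at any
minimizer z, whence M'(t) ≤ (β(t)/2)(max_x v(t,x)² − M(t)²). -/
theorem minimal_slope_riccati_evolution
    (T : ℝ) (hT : 0 < T) (γ : ℝ) (β : ℝ → ℝ)
    (hβ : ContinuousOn β (Set.Ico 0 T)) (hβpos : ∀ t ∈ Set.Ico (0 : ℝ) T, 0 < β t)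
    (v vx vxx vt vtx : ℝ → ℝ → ℝ)
    (hper : ∀ t x, v t (x + 2 * π) = v t x)
    (hvx : ∀ t ∈ Set.Ico (0 : ℝ) T, ∀ x : ℝ, HasDerivAt (fun y => v t y) (vx t x) x)
    (hvxx : ∀ t ∈ Set.Ico (0 : ℝ) T, ∀ x : ℝ, HasDerivAt (fun y => vx t y) (vxx t x) x)
    (hvt : ∀ t ∈ Set.Ico (0 : ℝ) T, ∀ x : ℝ,
      HasDerivWithinAt (fun s => v s x) (vt t x) (Set.Ico 0 T) t)
    (hvtx : ∀ t ∈ Set.Ico (0 : ℝ) T, ∀ x : ℝ,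
      HasDerivWithinAt (fun s => vx s x) (vtx t x) (Set.Ico 0 T) t)
    (hvc : ContinuousOn (fun p : ℝ × ℝ => v p.1 p.2) (Set.Ico 0 T ×ˢ Set.univ))
    (hvxc : ContinuousOn (fun p : ℝ × ℝ => vx p.1 p.2) (Set.Ico 0 T ×ˢ Set.univ))
    (hvxxc : ContinuousOn (fun p : ℝ × ℝ => vxx p.1 p.2) (Set.Ico 0 T ×ˢ Set.univ))
    (hvtc : ContinuousOn (fun p : ℝ × ℝ => vt p.1 p.2) (Set.Ico 0 T ×ˢ Set.univ))
    (hvtxc : ContinuousOn (fun p : ℝ × ℝ => vtx p.1 p.2) (Set.Ico 0 T ×ˢ Set.univ))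
    (hpde : ∀ t ∈ Set.Ico (0 : ℝ) T, ∀ x : ℝ,
      vtx t x - γ * vxx t x + β t * v t x * vxx t x
        = β t * (v t x) ^ 2 - β t * (vx t x) ^ 2 / 2
          - β t * Gconv (fun y => (v t y) ^ 2 + (vx t y) ^ 2 / 2) x)
    (M : ℝ → ℝ) (hM : ∀ t, M t = sInf (vx t '' Set.Icc 0 (2 * π))) :
    (∀ a b : ℝ, 0 ≤ a → b < T → ∃ K : NNReal, LipschitzOnWith K M (Set.Icc a b)) ∧
    (∀ᵐ t ∂(volume.restrict (Set.Ioo 0 T)), ∀ m' : ℝ, HasDerivAt M m' t →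
      (∀ z ∈ Set.Icc (0 : ℝ) (2 * π), vx t z = M t →
        m' = β t * ((v t z) ^ 2 - (M t) ^ 2 / 2
          - Gconv (fun y => (v t y) ^ 2 + (vx t y) ^ 2 / 2) z)) ∧
      m' ≤ (β t / 2) * (sSup ((fun x => (v t x) ^ 2) '' Set.Icc 0 (2 * π)) - (M t) ^ 2)) :=
  minimal_slope_riccati_evolution_general T γ β hβpos v vx vxx vtx hper hvx hvxx hvtx hvtxc hpde M
    hM
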